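/- Let H be a non-compact locally compact group whose identity component H₀ is compact. Let S be a locally compact group acting continuously on H by topological group automorphisms, the automorphism given by s ∈ S being denoted π(s), and suppose there exists ξ ∈ S such that the cyclic subgroup generated by ξ is infinite, discrete and cocompact in S, and the automorphism π(ξ) contracts H. Then: (i) there is a unique continuous surjective group homomorphism p : S → ℤ with p(ξ) > 0, and its kernel W = Ker(p) is compact; (ii) there exists a compact open subgroup Ω of H such that π(w)Ω = Ω for every w ∈ W, π(s)Ω ⊆ Ω for every s ∈ S with p(s) ≥ 0, and for every compact subset K ⊆ H there exists k ∈ ℕ such that π(s)K ⊆ Ω whenever p(s) ≥ k. -/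

import Mathlib

/-!
The ω-limit `Λ = ⋂ₖ closure (αᵏ C)` of a forward invariant compact vacuum `C` of `α = π ξ` is a
compact subgroup, each of whose open neighbourhoods is again a vacuum. Since `H₀` is compact, `H`
has compact open subgroups, hence one containing `Λ`, and intersecting its preimages under the
powers of `α` gives a compact open subgroup `Ω₀` with `α Ω₀ ⊆ Ω₀` which eventually swallows every
compact set; `α Ω₀ ≠ Ω₀` because `H` is not compact.

Comparing `π s Ω₀` with `Ω₀` through relative indices gives a locally constant homomorphism
`ℓ : S → ℝ` (a logarithmic modular function) with `ℓ ξ > 0`. As `S` is a compact set times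
`⟨ξ⟩`, `ℓ` is proper, so its image is a discrete, hence cyclic, subgroup of `ℝ`, and `p` is `ℓ`
divided by a generator. A continuous homomorphism `S → ℤ` vanishing at `ξ` is bounded, hence zero,
which gives uniqueness. Finally `Ω = ⋂_{p s ≥ 0} π(s)⁻¹ Ω₀`; it is open because `π s Ω₀ ⊆ Ω₀` once
`p s` is large, and `{0 ≤ p < k}` is compact.
-/

open Set Function Filter Topology Pointwise

theorem exists_isClopen_subset_of_connectedComponent_subset {X : Type*} [TopologicalSpace X]
    [CompactSpace X] [T2Space X] {x : X} {U : Set X} (hU : IsOpen U)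
    (h : connectedComponent x ⊆ U) : ∃ V, IsClopen V ∧ x ∈ V ∧ V ⊆ U := by
  rw [connectedComponent_eq_iInter_isClopen] at h
  have : Nonempty {s : Set X // IsClopen s ∧ x ∈ s} := ⟨⟨univ, isClopen_univ, mem_univ x⟩⟩
  obtain ⟨⟨V, hV, hxV⟩, hVU⟩ := exists_subset_nhds_of_compactSpace
    (V := fun s : {s : Set X // IsClopen s ∧ x ∈ s} => s.1)
    (fun s t => ⟨⟨s.1 ∩ t.1, s.2.1.inter t.2.1, s.2.2, t.2.2⟩,
      inter_subset_left, inter_subset_right⟩)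
    (fun s => s.2.1.isClosed) fun y hy => hU.mem_nhds (h hy)
  exact ⟨V, hV, hxV, hVU⟩

section CompactOpenSubgroup

variable {G : Type*} [Group G] [TopologicalSpace G] [IsTopologicalGroup G]

theorem exists_isCompact_isOpen_subgroup_of_isCompact_isOpen {B : Set G} (hBc : IsCompact B)
    (hBo : IsOpen B) (hB1 : (1 : G) ∈ B) :
    ∃ V : Subgroup G, IsCompact (V : Set G) ∧ IsOpen (V : Set G) := by
  obtain ⟨T, hT, hTB⟩ := compact_open_separated_mul_left hBc hBo subset_rfl
  have hsmul : ∀ g ∈ T, g • B ⊆ B := fun g hg =>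
    (smul_set_subset_mul hg).trans hTB
  let V := MulAction.stabilizer G B
  have hVB : (V : Set G) ⊆ B := fun g hg => by
    rw [SetLike.mem_coe, MulAction.mem_stabilizer_iff] at hg
    have := smul_mem_smul_set (a := g) hB1
    rwa [hg, smul_eq_mul, mul_one] at this
  have hVo : IsOpen (V : Set G) := by
    refine V.isOpen_of_mem_nhds (g := 1) (mem_of_superset (inter_mem hT (inv_mem_nhds_one G hT))
      fun g ⟨hg, hg'⟩ => ?_)
    refine (hsmul g hg).antisymm ?_
    rw [subset_smul_set_iff]
    exact hsmul _ hg'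
  exact ⟨V, hBc.of_isClosed_subset (V.isClosed_of_isOpen hVo) hVB, hVo⟩

theorem exists_isCompact_isOpen_subgroup_of_t2Space [T2Space G] [LocallyCompactSpace G]
    (hG : IsCompact (connectedComponent (1 : G))) :
    ∃ V : Subgroup G, IsCompact (V : Set G) ∧ IsOpen (V : Set G) := by
  obtain ⟨K, hKc, hGK⟩ := exists_compact_superset hG
  have : CompactSpace K := isCompact_iff_compactSpace.1 hKc
  set e : K := ⟨1, interior_subset (hGK mem_connectedComponent)⟩
  have he : connectedComponent e ⊆ Subtype.val ⁻¹' interior K := fun y hy =>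
    hGK <| (isPreconnected_connectedComponent.image _ continuous_subtype_val.continuousOn
      |>.subset_connectedComponent ⟨e, mem_connectedComponent, rfl⟩) ⟨y, hy, rfl⟩
  obtain ⟨A, hA, heA, hAK⟩ := exists_isClopen_subset_of_connectedComponent_subset
    (isOpen_interior.preimage continuous_subtype_val) he
  obtain ⟨O, hO, hOA⟩ := isOpen_induced_iff.1 hA.isOpen
  have hBO : Subtype.val '' A = O ∩ interior K := by
    ext x
    constructor
    · rintro ⟨a, ha, rfl⟩
      exact ⟨by rw [← hOA] at ha; exact ha, hAK ha⟩
    · rintro ⟨hxO, hxK⟩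
      exact ⟨⟨x, interior_subset hxK⟩, by rw [← hOA]; exact hxO, rfl⟩
  refine exists_isCompact_isOpen_subgroup_of_isCompact_isOpen
    (hA.isClosed.isCompact.image continuous_subtype_val) ?_ ⟨e, heA, rfl⟩
  rw [hBO]
  exact hO.inter isOpen_interior

theorem exists_isCompact_isOpen_subgroup [LocallyCompactSpace G]
    (hG : IsCompact (connectedComponent (1 : G))) :
    ∃ V : Subgroup G, IsCompact (V : Set G) ∧ IsOpen (V : Set G) := by
  have : LocallyCompactSpace (SeparationQuotient G) :=
    SeparationQuotient.isOpenQuotientMap_mk.locallyCompactSpace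
  have hq : connectedComponent (1 : SeparationQuotient G) ⊆
      SeparationQuotient.mk '' connectedComponent 1 := by
    intro y hy
    obtain ⟨x, rfl⟩ := SeparationQuotient.surjective_mk y
    refine ⟨x, IsPreconnected.subset_connectedComponent
      (s := SeparationQuotient.mk ⁻¹' connectedComponent 1) ?_ ?_ hy, rfl⟩
    · rw [← SeparationQuotient.isInducing_mk.isPreconnected_image,
        image_preimage_eq _ SeparationQuotient.surjective_mk]
      exact isPreconnected_connectedComponent
    · simpa using (mem_connectedComponent : (1 : SeparationQuotient G) ∈ _)
  obtain ⟨V, hVc, hVo⟩ := exists_isCompact_isOpen_subgroup_of_t2Space <|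
    (hG.image SeparationQuotient.continuous_mk).of_isClosed_subset isClosed_connectedComponent hq
  exact ⟨V.comap SeparationQuotient.mkMonoidHom, SeparationQuotient.isInducing_mk.isCompact_preimage
    (by simp [SeparationQuotient.range_mk]) hVc, hVo.preimage SeparationQuotient.continuous_mk⟩

end CompactOpenSubgroup

def IsVacuum {X : Type*} [TopologicalSpace X] (f : X → X) (U : Set X) : Prop :=
  ∀ M : Set X, IsCompact M → ∀ᶠ k in atTop, f^[k] '' M ⊆ U

namespace IsVacuum

variable {X : Type*} [TopologicalSpace X] {f : X → X} {U V : Set X}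

theorem mono (hU : IsVacuum f U) (hUV : U ⊆ V) : IsVacuum f V :=
  fun M hM => (hU M hM).mono fun _ hk => hk.trans hUV

theorem of_image_iterate_subset (hU : IsVacuum f U) {K : ℕ} (hK : f^[K] '' U ⊆ V) :
    IsVacuum f V := by
  intro M hM
  obtain ⟨N, hN⟩ := eventually_atTop.1 (hU M hM)
  refine eventually_atTop.2 ⟨K + N, fun k hk => ?_⟩
  rw [show k = K + (k - K) by omega, iterate_add, image_comp]
  exact (image_mono (hN _ (by omega))).trans hK

theorem exists_isCompact_mapsTo (hf : Continuous f) (hU : IsVacuum f U) (hUc : IsCompact U) :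
    ∃ C, IsCompact C ∧ IsVacuum f C ∧ MapsTo f C C := by
  obtain ⟨N, hN⟩ := eventually_atTop.1 (hU U hUc)
  refine ⟨⋃ j < N + 1, f^[j] '' U, (finite_lt_nat _).isCompact_biUnion
      fun j _ => hUc.image (hf.iterate j), hU.mono ?_, ?_⟩
  · exact fun x hx => mem_biUnion (Nat.zero_lt_succ N) ⟨x, hx, rfl⟩
  · intro y hy
    obtain ⟨j, -, x, hx, rfl⟩ := mem_iUnion₂.1 hy
    rw [← iterate_succ_apply' f j x]
    rcases lt_or_ge (j + 1) (N + 1) with h | h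
    · exact mem_biUnion h ⟨x, hx, rfl⟩
    · exact mem_biUnion (Nat.zero_lt_succ N) ⟨_, hN (j + 1) (by omega) ⟨x, hx, rfl⟩, rfl⟩

theorem eq_univ_of_image_eq (hU : IsVacuum f U) (hf : Injective f) (hfU : f '' U = U) :
    U = univ := by
  refine eq_univ_of_forall fun x => ?_
  obtain ⟨k, hk⟩ := (hU {x} isCompact_singleton).exists
  have hkU : f^[k] '' U = U := by rw [image_iterate_eq]; exact iterate_fixed hfU k
  rw [image_singleton, singleton_subset_iff, ← hkU] at hk
  exact (hf.iterate k).mem_set_image.1 hk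

end IsVacuum

section Iterate

variable {H : Type*} [Group H] {F : Type*} [FunLike F H H] [MonoidHomClass F H H]

theorem image_iterate_mul (f : F) (k : ℕ) (s t : Set H) :
    (⇑f)^[k] '' (s * t) = (⇑f)^[k] '' s * (⇑f)^[k] '' t := by
  simp only [← image2_mul]
  exact image_image2_distrib (iterate_map_mul f k)

theorem image_iterate_inv (f : F) (k : ℕ) (s : Set H) :
    (⇑f)^[k] '' s⁻¹ = ((⇑f)^[k] '' s)⁻¹ := by
  rw [← image_inv_eq_inv, ← image_inv_eq_inv]
  exact image_comm (iterate_map_inv f k)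

end Iterate

section Attractor

variable {H : Type*} [Group H] [TopologicalSpace H] [IsTopologicalGroup H]
  {F : Type*} [FunLike F H H] [MonoidHomClass F H H] {f : F}

omit [IsTopologicalGroup H] in
theorem IsVacuum.one_mem {U : Set H} (hU : IsVacuum f U) : (1 : H) ∈ U := by
  obtain ⟨k, hk⟩ := (hU {1} isCompact_singleton).exists
  exact hk ⟨1, rfl, iterate_map_one f k⟩

theorem IsVacuum.exists_image_iterate_mul_subset {C : Set H} (hC : IsVacuum f C)
    (hCc : IsCompact C) (K : ℕ) : ∃ N, (⇑f)^[N] '' C * (⇑f)^[N] '' C ⊆ (⇑f)^[K] '' C := by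
  obtain ⟨N, hN⟩ := (hC _ (hCc.mul hCc)).exists
  refine ⟨K + N, ?_⟩
  rw [← image_iterate_mul, iterate_add, image_comp]
  exact image_mono hN

theorem IsVacuum.exists_image_iterate_inv_subset {C : Set H} (hC : IsVacuum f C)
    (hCc : IsCompact C) (K : ℕ) : ∃ N, ((⇑f)^[N] '' C)⁻¹ ⊆ (⇑f)^[K] '' C := by
  obtain ⟨N, hN⟩ := (hC _ hCc.inv).exists
  refine ⟨K + N, ?_⟩
  rw [← image_iterate_inv, iterate_add, image_comp]
  exact image_mono hN

theorem IsVacuum.exists_isCompact_subgroup (hf : Continuous f) {U : Set H} (hU : IsVacuum f U)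
    (hUc : IsCompact U) :
    ∃ Λ : Subgroup H, IsCompact (Λ : Set H) ∧
      ∀ W, IsOpen W → (Λ : Set H) ⊆ W → IsVacuum f W := by
  obtain ⟨C, hCc, hC, hfC⟩ := hU.exists_isCompact_mapsTo hf hUc
  have hanti : Antitone fun K => closure ((⇑f)^[K] '' C) := fun K L hKL => by
    dsimp only
    rw [show L = K + (L - K) by omega, iterate_add, image_comp]
    exact closure_mono (image_mono (hfC.iterate _).image_subset)
  let Λ : Subgroup H :=
    { carrier := ⋂ K, closure ((⇑f)^[K] '' C)
      one_mem' := mem_iInter.2 fun K => subset_closure ⟨1, hC.one_mem, iterate_map_one f K⟩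
      mul_mem' := fun {x y} hx hy => mem_iInter.2 fun K => by
        obtain ⟨N, hN⟩ := hC.exists_image_iterate_mul_subset hCc K
        exact map_mem_closure₂ continuous_mul (mem_iInter.1 hx N) (mem_iInter.1 hy N)
          fun a ha b hb => hN (mul_mem_mul ha hb)
      inv_mem' := fun {x} hx => mem_iInter.2 fun K => by
        obtain ⟨N, hN⟩ := hC.exists_image_iterate_inv_subset hCc K
        exact map_mem_closure continuous_inv (mem_iInter.1 hx N) fun a ha => hN (inv_mem_inv.2 ha) }
  have hΛC : (Λ : Set H) ⊆ closure C := iInter_subset_of_subset 0 (by simp)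
  refine ⟨Λ, hCc.closure.of_isClosed_subset (isClosed_iInter fun _ => isClosed_closure) hΛC,
    fun W hW hΛW => ?_⟩
  obtain ⟨K, hK⟩ := (hCc.closure.diff hW).elim_directed_family_closed _ (fun _ => isClosed_closure)
    (eq_empty_of_forall_notMem fun x ⟨⟨_, hxW⟩, hx⟩ => hxW (hΛW hx)) hanti.directed_ge
  refine hC.of_image_iterate_subset (K := K) fun x hx => by_contra fun hxW => ?_
  have hxC : x ∈ closure C := by simpa using hanti (Nat.zero_le K) (subset_closure hx)
  exact (eq_empty_iff_forall_notMem.1 hK) x ⟨⟨hxC, hxW⟩, subset_closure hx⟩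

theorem Subgroup.exists_isCompact_isOpen_le {Λ V : Subgroup H} (hΛ : IsCompact (Λ : Set H))
    (hVc : IsCompact (V : Set H)) (hVo : IsOpen (V : Set H)) :
    ∃ P : Subgroup H, IsCompact (P : Set H) ∧ IsOpen (P : Set H) ∧ Λ ≤ P := by
  set Q : Subgroup H := ⨅ l : Λ, V.comap (MulAut.conj (l : H)).toMonoidHom with hQ
  have mem_Q : ∀ x, x ∈ Q ↔ ∀ l ∈ Λ, l * x * l⁻¹ ∈ V := by
    simp [hQ, Subgroup.mem_iInf]
  have hQo : IsOpen (Q : Set H) := by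
    refine Q.isOpen_of_mem_nhds (g := 1) ?_
    have : ∀ᶠ x in 𝓝 (1 : H), ∀ l ∈ Λ, l * x * l⁻¹ ∈ V := by
      refine hΛ.eventually_forall_of_forall_eventually fun l _ => ?_
      have hcont : Continuous fun z : H × H => z.2 * z.1 * z.2⁻¹ := by fun_prop
      exact hcont.continuousAt.eventually_mem (hVo.mem_nhds (by simp [V.one_mem]))
    exact this.mono fun x hx => (mem_Q x).2 hx
  have hQV : Q ≤ V := fun x hx => by simpa using (mem_Q x).1 hx 1 Λ.one_mem
  have hΛQ : Λ ≤ Subgroup.normalizer (Q : Set H) := by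
    intro m hm
    rw [Subgroup.mem_normalizer_iff]
    intro x
    simp only [mem_Q]
    refine ⟨fun hx l hl => ?_, fun hx l hl => ?_⟩
    · simpa [mul_assoc] using hx (l * m) (Λ.mul_mem hl hm)
    · simpa [mul_assoc] using hx (l * m⁻¹) (Λ.mul_mem hl (Λ.inv_mem hm))
  refine ⟨Q ⊔ Λ, ?_, Subgroup.isOpen_mono le_sup_left hQo, le_sup_right⟩
  rw [Subgroup.coe_mul_of_right_le_normalizer_left Q Λ hΛQ]
  exact (hVc.of_isClosed_subset (Q.isClosed_of_isOpen hQo) hQV).mul hΛ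

theorem IsVacuum.exists_subgroup_mapsTo (hf : Continuous f) {P : Subgroup H}
    (hP : IsVacuum f P) (hPc : IsCompact (P : Set H)) (hPo : IsOpen (P : Set H)) :
    ∃ Ω : Subgroup H, IsCompact (Ω : Set H) ∧ IsOpen (Ω : Set H) ∧ MapsTo f Ω Ω ∧
      IsVacuum f Ω := by
  let Ω : Subgroup H :=
    { carrier := {x | ∀ k, (⇑f)^[k] x ∈ P}
      one_mem' := fun k => by simp [iterate_map_one, P.one_mem]
      mul_mem' := fun hx hy k => by simpa [iterate_map_mul] using P.mul_mem (hx k) (hy k)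
      inv_mem' := fun hx k => by simpa [iterate_map_inv] using P.inv_mem (hx k) }
  have mem_Ω : ∀ x, x ∈ Ω ↔ ∀ k, (⇑f)^[k] x ∈ P := fun _ => Iff.rfl
  have hΩP : (Ω : Set H) ⊆ P := fun x hx => (mem_Ω x).1 hx 0
  have hΩ_closed : IsClosed (Ω : Set H) := by
    have : (Ω : Set H) = ⋂ k, (⇑f)^[k] ⁻¹' P := by ext; simp [mem_Ω]
    rw [this]
    exact isClosed_iInter fun k => (P.isClosed_of_isOpen hPo).preimage (hf.iterate k)
  obtain ⟨N, hN⟩ := eventually_atTop.1 (hP P hPc)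
  have hΩ_open : IsOpen (Ω : Set H) := by
    refine Ω.isOpen_of_mem_nhds (g := 1) (mem_of_superset
      (((finite_le_nat N).isOpen_biInter fun k _ => hPo.preimage (hf.iterate k)).mem_nhds
        (mem_iInter₂.2 fun k _ => by simp [iterate_map_one, P.one_mem])) fun x hx k => ?_)
    rcases le_or_gt k N with hk | hk
    · exact mem_iInter₂.1 hx k hk
    · exact hN k hk.le ⟨x, mem_iInter₂.1 hx 0 (Nat.zero_le N), rfl⟩
  refine ⟨Ω, hPc.of_isClosed_subset hΩ_closed hΩP, hΩ_open, fun x hx k => ?_, fun M hM => ?_⟩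
  · simpa only [← iterate_succ_apply] using hx (k + 1)
  · obtain ⟨N', hN'⟩ := eventually_atTop.1 (hP M hM)
    refine eventually_atTop.2 ⟨N', fun k hk => ?_⟩
    rintro _ ⟨x, hx, rfl⟩ j
    rw [← iterate_add_apply]
    exact hN' (j + k) (by omega) ⟨x, hx, rfl⟩

theorem IsVacuum.exists_subgroup_mapsTo_of_isCompact (hf : Continuous f) {U : Set H}
    (hU : IsVacuum f U) (hUc : IsCompact U)
    (hV : ∃ V : Subgroup H, IsCompact (V : Set H) ∧ IsOpen (V : Set H)) :
    ∃ Ω : Subgroup H, IsCompact (Ω : Set H) ∧ IsOpen (Ω : Set H) ∧ MapsTo f Ω Ω ∧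
      IsVacuum f Ω := by
  obtain ⟨Λ, hΛc, hΛ⟩ := hU.exists_isCompact_subgroup hf hUc
  obtain ⟨V, hVc, hVo⟩ := hV
  obtain ⟨P, hPc, hPo, hΛP⟩ := Subgroup.exists_isCompact_isOpen_le hΛc hVc hVo
  exact (hΛ P hPo hΛP).exists_subgroup_mapsTo hf hPc hPo

end Attractor

namespace Subgroup

variable {G : Type*} [Group G]

/-- `[A : A ⊓ B] / [B : A ⊓ B]`, which is `μ A / μ B` for a Haar measure `μ` when `A` and `B`
are compact open. -/
noncomputable def indexRatio (A B : Subgroup G) : ℝ := B.relIndex A / A.relIndex B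

@[simp]
theorem indexRatio_self (A : Subgroup G) : A.indexRatio A = 1 := by
  simp [indexRatio]

theorem indexRatio_map_map {G' : Type*} [Group G'] {f : G →* G'} (hf : Injective f)
    (A B : Subgroup G) : (A.map f).indexRatio (B.map f) = A.indexRatio B := by
  simp only [indexRatio, relIndex_map_map_of_injective _ _ hf]

theorem Commensurable.indexRatio_pos {A B : Subgroup G} (h : A.Commensurable B) :
    0 < A.indexRatio B :=
  div_pos (Nat.cast_pos.2 (Nat.pos_of_ne_zero h.2)) (Nat.cast_pos.2 (Nat.pos_of_ne_zero h.1))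

theorem indexRatio_eq_div {D X Y : Subgroup G} (hD : D ≤ X ⊓ Y) (hDX : D.relIndex X ≠ 0) :
    X.indexRatio Y = D.relIndex X / D.relIndex Y := by
  have hX := relIndex_mul_relIndex D (X ⊓ Y) X hD inf_le_left
  have hY := relIndex_mul_relIndex D (X ⊓ Y) Y hD inf_le_right
  rw [inf_relIndex_left] at hX
  rw [inf_relIndex_right] at hY
  have hD' : (D.relIndex (X ⊓ Y) : ℝ) ≠ 0 := by
    exact_mod_cast left_ne_zero_of_mul (hX ▸ hDX)
  rw [indexRatio, ← hX, ← hY]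
  push_cast
  rw [mul_div_mul_left _ _ hD']

theorem indexRatio_mul_indexRatio {A B C : Subgroup G} (hAB : A.Commensurable B)
    (hBC : B.Commensurable C) : A.indexRatio B * B.indexRatio C = A.indexRatio C := by
  have hDA : (A ⊓ B ⊓ C).relIndex A ≠ 0 :=
    relIndex_inf_ne_zero (by rw [inf_relIndex_left]; exact hAB.2) (hAB.trans hBC).2
  have hDB : (A ⊓ B ⊓ C).relIndex B ≠ 0 :=
    relIndex_inf_ne_zero (by rw [inf_relIndex_right]; exact hAB.1) hBC.2
  have hDB' : ((A ⊓ B ⊓ C).relIndex B : ℝ) ≠ 0 := by exact_mod_cast hDB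
  rw [indexRatio_eq_div inf_le_left hDA,
    indexRatio_eq_div (le_inf (inf_le_left.trans inf_le_right) inf_le_right) hDB,
    indexRatio_eq_div (le_inf (inf_le_left.trans inf_le_left) inf_le_right) hDA,
    div_mul_div_cancel₀ hDB']

variable [TopologicalSpace G] [IsTopologicalGroup G]

theorem relIndex_ne_zero_of_isOpen_of_isCompact {A B : Subgroup G} (hA : IsOpen (A : Set G))
    (hB : IsCompact (B : Set G)) : A.relIndex B ≠ 0 := by
  have : CompactSpace B := isCompact_iff_compactSpace.1 hB
  have := quotient_finite_of_isOpen (A.subgroupOf B) (hA.preimage continuous_subtype_val)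
  exact index_ne_zero_of_finite

theorem commensurable_of_isCompact_of_isOpen {A B : Subgroup G} (hAc : IsCompact (A : Set G))
    (hAo : IsOpen (A : Set G)) (hBc : IsCompact (B : Set G)) (hBo : IsOpen (B : Set G)) :
    A.Commensurable B :=
  ⟨relIndex_ne_zero_of_isOpen_of_isCompact hAo hBc, relIndex_ne_zero_of_isOpen_of_isCompact hBo hAc⟩

end Subgroup

theorem isLocallyConstant_of_map_mul {S M : Type*} [Group S] [TopologicalSpace S]
    [IsTopologicalGroup S] [AddZeroClass M] {ℓ : S → M} (hℓ : ∀ s t, ℓ (s * t) = ℓ s + ℓ t)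
    (h : ∀ᶠ u in 𝓝 1, ℓ u = 0) : IsLocallyConstant ℓ := by
  refine (IsLocallyConstant.iff_eventually_eq ℓ).2 fun s => ?_
  rw [← map_mul_left_nhds_one s, eventually_map]
  exact h.mono fun u hu => by rw [hℓ, hu, add_zero]

section Action

variable {S H : Type*} [Group S] [TopologicalSpace S] [Group H] [TopologicalSpace H]
  {π : S →* MulAut H}

omit [TopologicalSpace S] [TopologicalSpace H] in
theorem image_act_eq_preimage (π : S →* MulAut H) (s : S) (U : Set H) :
    π s '' U = π s⁻¹ ⁻¹' U := by
  rw [map_inv]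
  exact (π s).image_eq_preimage_symm U

omit [TopologicalSpace S] [TopologicalSpace H] in
theorem iterate_act (π : S →* MulAut H) (ξ : S) (j : ℕ) (x : H) :
    (⇑(π ξ))^[j] x = π (ξ ^ j) x := by
  induction j generalizing x with
  | zero => simp
  | succ j ih => rw [iterate_succ_apply, ih, pow_succ, map_mul, MulAut.mul_apply]

variable (hπ : Continuous fun q : S × H => π q.1 q.2)
include hπ

theorem continuous_act (s : S) : Continuous (π s) := hπ.comp (Continuous.prodMk_right s)

theorem isOpen_image_act (s : S) {U : Set H} (hU : IsOpen U) : IsOpen (π s '' U) := by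
  rw [image_act_eq_preimage]
  exact hU.preimage (continuous_act hπ s⁻¹)

theorem eventually_mapsTo_act [IsTopologicalGroup S] {K U : Set H} (hK : IsCompact K)
    (hU : IsOpen U) (hKU : K ⊆ U) : ∀ᶠ s in 𝓝 1, MapsTo (π s) K U :=
  hK.eventually_forall_of_forall_eventually fun x hx =>
    hπ.continuousAt.eventually_mem (hU.mem_nhds (by simpa using hKU hx))

variable {Ω : Subgroup H}

theorem eventually_map_act_eq [IsTopologicalGroup S] (hΩc : IsCompact (Ω : Set H))
    (hΩo : IsOpen (Ω : Set H)) : ∀ᶠ s in 𝓝 1, Ω.map (π s : H →* H) = Ω := by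
  have h := eventually_mapsTo_act hπ hΩc hΩo subset_rfl
  filter_upwards [h, (continuous_inv.tendsto' 1 1 inv_one).eventually h] with s hs hs'
  refine le_antisymm (Subgroup.map_le_iff_le_comap.2 fun x hx => hs hx) fun x hx => ?_
  exact ⟨π s⁻¹ x, hs' hx, by simp⟩

theorem commensurable_map_act [IsTopologicalGroup H] (hΩc : IsCompact (Ω : Set H))
    (hΩo : IsOpen (Ω : Set H)) (s : S) :
    Ω.Commensurable (Ω.map (π s : H →* H)) :=
  Subgroup.commensurable_of_isCompact_of_isOpen hΩc hΩo
    (by simpa using hΩc.image (continuous_act hπ s)) (by simpa using isOpen_image_act hπ s hΩo)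

end Action

section ModularLog

variable {S H : Type*} [Group S] [TopologicalSpace S] [Group H] [TopologicalSpace H]

/-- `log (μ Ω / μ (π s Ω))` for a Haar measure `μ`, i.e. minus the logarithm of the modulus
of `π s`. -/
noncomputable def modularLog (π : S →* MulAut H) (Ω : Subgroup H) (s : S) : ℝ :=
  Real.log (Ω.indexRatio (Ω.map (π s : H →* H)))

variable [IsTopologicalGroup H] {π : S →* MulAut H} (hπ : Continuous fun q : S × H => π q.1 q.2)
  {Ω : Subgroup H} (hΩc : IsCompact (Ω : Set H)) (hΩo : IsOpen (Ω : Set H))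
include hπ hΩc hΩo

theorem modularLog_mul (s t : S) :
    modularLog π Ω (s * t) = modularLog π Ω s + modularLog π Ω t := by
  have hcomm := commensurable_map_act hπ hΩc hΩo
  have hmap : Ω.map (π (s * t) : H →* H) =
      (Ω.map (π t : H →* H)).map (π s : H →* H) := by
    rw [Subgroup.map_map]
    congr 1
    ext x
    simp
  unfold modularLog
  rw [← Real.log_mul (hcomm s).indexRatio_pos.ne' (hcomm t).indexRatio_pos.ne',
    ← Subgroup.indexRatio_mul_indexRatio (hcomm s) ((hcomm s).symm.trans (hcomm (s * t))), hmap,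
    Subgroup.indexRatio_map_map (f := (π s : H →* H)) (π s).injective]

theorem isLocallyConstant_modularLog [IsTopologicalGroup S] :
    IsLocallyConstant (modularLog π Ω) :=
  isLocallyConstant_of_map_mul (modularLog_mul hπ hΩc hΩo)
    ((eventually_map_act_eq hπ hΩc hΩo).mono fun u hu => by
      rw [modularLog, hu, Subgroup.indexRatio_self, Real.log_one])

theorem modularLog_pos {ξ : S} (hξ : π ξ '' Ω ⊆ Ω) (hne : π ξ '' Ω ≠ Ω) :
    0 < modularLog π Ω ξ := by
  have hle : Ω.map (π ξ : H →* H) ≤ Ω := fun x hx => hξ (by simpa using hx)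
  have h1 : (Ω.map (π ξ : H →* H)).relIndex Ω ≠ 1 := fun h =>
    hne (by simpa using congrArg SetLike.coe (le_antisymm hle (Subgroup.relIndex_eq_one.1 h)))
  have h0 := (commensurable_map_act hπ hΩc hΩo ξ).2
  refine Real.log_pos ?_
  rw [Subgroup.indexRatio, Subgroup.relIndex_eq_one.2 hle, Nat.cast_one, div_one]
  exact_mod_cast (by omega : 1 < (Ω.map (π ξ : H →* H)).relIndex Ω)

end ModularLog

theorem exists_isCompact_image_eq_univ {X Y : Type*} [TopologicalSpace X]
    [WeaklyLocallyCompactSpace X] [TopologicalSpace Y] [CompactSpace Y] {f : X → Y}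
    (hf : IsOpenMap f) (hsurj : Surjective f) : ∃ K, IsCompact K ∧ f '' K = univ := by
  choose K hKc hKx using fun x : X => exists_compact_mem_nhds x
  obtain ⟨t, ht⟩ := isCompact_univ.elim_finite_subcover (fun x => f '' interior (K x))
    (fun x => hf _ isOpen_interior) fun y _ =>
      let ⟨x, hx⟩ := hsurj y
      mem_iUnion.2 ⟨x, x, mem_interior_iff_mem_nhds.2 (hKx x), hx⟩
  refine ⟨⋃ x ∈ t, K x, t.isCompact_biUnion fun x _ => hKc x, eq_univ_of_univ_subset fun y hy => ?_⟩
  obtain ⟨x, hxt, z, hz, rfl⟩ := mem_iUnion₂.1 (ht hy)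
  exact ⟨z, mem_iUnion₂.2 ⟨x, hxt, interior_subset hz⟩, rfl⟩

theorem exists_isCompact_forall_eq_mul_zpow {S : Type*} [Group S] [TopologicalSpace S]
    [IsTopologicalGroup S] [LocallyCompactSpace S] (ξ : S)
    [CompactSpace (S ⧸ Subgroup.zpowers ξ)] :
    ∃ C : Set S, IsCompact C ∧ ∀ s, ∃ c ∈ C, ∃ n : ℤ, s = c * ξ ^ n := by
  obtain ⟨C, hC, hCu⟩ :=
    exists_isCompact_image_eq_univ (QuotientGroup.isOpenMap_coe (N := Subgroup.zpowers ξ))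
      QuotientGroup.mk_surjective
  refine ⟨C, hC, fun s => ?_⟩
  obtain ⟨c, hc, hcs⟩ := hCu.symm ▸ mem_univ (s : S ⧸ Subgroup.zpowers ξ)
  obtain ⟨n, hn⟩ := Subgroup.mem_zpowers_iff.1 (QuotientGroup.eq.1 hcs)
  exact ⟨c, hc, n, by rw [hn, mul_inv_cancel_left]⟩

theorem IsLocallyConstant.finite_image_of_isCompact {X Y : Type*} [TopologicalSpace X]
    {f : X → Y} (hf : IsLocallyConstant f) {K : Set X} (hK : IsCompact K) : (f '' K).Finite := by
  have : CompactSpace K := isCompact_iff_compactSpace.1 hK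
  have := (hf.comp_continuous (continuous_subtype_val : Continuous ((↑) : K → X))).range_finite
  rwa [range_comp, Subtype.range_coe] at this

theorem map_zpow_of_map_mul {S M : Type*} [Group S] [AddGroup M] {ℓ : S → M}
    (hℓ : ∀ s t, ℓ (s * t) = ℓ s + ℓ t) (s : S) (n : ℤ) : ℓ (s ^ n) = n • ℓ s :=
  congrArg Multiplicative.toAdd
    (map_zpow (MonoidHom.mk' (fun s => Multiplicative.ofAdd (ℓ s)) hℓ) s n)

section CocompactCyclic

variable {S : Type*} [Group S] [TopologicalSpace S] {C : Set S} {ξ : S}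
  (hC : IsCompact C) (hCξ : ∀ s, ∃ c ∈ C, ∃ n : ℤ, s = c * ξ ^ n)
include hC hCξ

theorem isCompact_preimage_Icc_of_map_mul [ContinuousMul S] {ℓ : S → ℝ}
    (hℓ : ∀ s t, ℓ (s * t) = ℓ s + ℓ t)
    (hℓc : Continuous ℓ) (hξ : 0 < ℓ ξ) (a b : ℝ) : IsCompact (ℓ ⁻¹' Icc a b) := by
  obtain ⟨B, hB⟩ := hC.exists_bound_of_continuousOn hℓc.continuousOn
  have hsub : ℓ ⁻¹' Icc a b ⊆
      ⋃ n ∈ Finset.Icc ⌈(a - B) / ℓ ξ⌉ ⌊(b + B) / ℓ ξ⌋, (· * ξ ^ n) '' C := by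
    intro s ⟨has, hsb⟩
    obtain ⟨c, hc, n, rfl⟩ := hCξ s
    rw [hℓ, map_zpow_of_map_mul hℓ, zsmul_eq_mul] at has hsb
    have hcB := abs_le.1 (Real.norm_eq_abs _ ▸ hB c hc)
    refine mem_iUnion₂.2 ⟨n, Finset.mem_Icc.2 ⟨Int.ceil_le.2 ?_, Int.le_floor.2 ?_⟩, c, hc, rfl⟩
    · rw [div_le_iff₀ hξ]; linarith
    · rw [le_div_iff₀ hξ]; linarith
  exact (Finset.isCompact_biUnion _ fun n _ => hC.image (continuous_mul_const _)).of_isClosed_subset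
    (isClosed_Icc.preimage hℓc) hsub

theorem exists_int_of_isLocallyConstant [ContinuousMul S] {ℓ : S → ℝ}
    (hℓ : ∀ s t, ℓ (s * t) = ℓ s + ℓ t)
    (hℓc : IsLocallyConstant ℓ) (hξ : 0 < ℓ ξ) :
    ∃ p : S → ℤ, (∀ s t, p (s * t) = p s + p t) ∧ Continuous p ∧ Surjective p ∧ 0 < p ξ := by
  have hℓzpow := map_zpow_of_map_mul hℓ
  let Γ : AddSubgroup ℝ :=
    { carrier := range ℓ
      add_mem' := fun ⟨s, hs⟩ ⟨t, ht⟩ => ⟨s * t, by rw [hℓ, hs, ht]⟩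
      zero_mem' := ⟨1, by simpa using hℓzpow 1 0⟩
      neg_mem' := fun ⟨s, hs⟩ => ⟨s⁻¹, by simpa [hs] using hℓzpow s (-1)⟩ }
  have hproper := isCompact_preimage_Icc_of_map_mul hC hCξ hℓ hℓc.continuous hξ
  have hfin : (range ℓ ∩ Ioc 0 (ℓ ξ)).Finite :=
    (hℓc.finite_image_of_isCompact (hproper 0 (ℓ ξ))).subset
      fun _ ⟨⟨s, hs⟩, hpos⟩ => ⟨s, by simpa [hs] using Ioc_subset_Icc_self hpos, hs⟩
  obtain ⟨a, ⟨⟨s₀, hs₀⟩, ha0, haξ⟩, ha⟩ :=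
    (range ℓ ∩ Ioc 0 (ℓ ξ)).exists_min_image id hfin ⟨ℓ ξ, ⟨ξ, rfl⟩, hξ, le_rfl⟩
  have hleast : IsLeast {g | g ∈ Γ ∧ 0 < g} a :=
    ⟨⟨⟨s₀, hs₀⟩, ha0⟩, fun g ⟨hg, hg0⟩ => (le_or_gt g (ℓ ξ)).elim
      (fun h => ha g ⟨hg, hg0, h⟩) fun h => haξ.trans h.le⟩
  have hmul : ∀ s, ∃ n : ℤ, n • a = ℓ s := fun s =>
    AddSubgroup.mem_closure_singleton.1 (AddSubgroup.cyclic_of_min hleast ▸ ⟨s, rfl⟩)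
  choose p hp using hmul
  have hinj : Injective fun n : ℤ => n • a := smul_left_injective ℤ ha0.ne'
  have hpadd : ∀ s t, p (s * t) = p s + p t := fun s t =>
    hinj (by simp only [add_smul, hp, hℓ])
  have hp1 : p s₀ = 1 := hinj (by simp only [hp, hs₀, one_smul])
  refine ⟨p, hpadd, (IsLocallyConstant.desc p _ (by convert hℓc; exact funext hp) hinj).continuous,
    fun k => ⟨s₀ ^ k, by rw [map_zpow_of_map_mul hpadd, hp1, smul_eq_mul, mul_one]⟩, ?_⟩
  have h := hp ξ
  rw [zsmul_eq_mul] at h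
  exact_mod_cast pos_of_mul_pos_left (h ▸ hξ) ha0.le

theorem isCompact_preimage_Icc_of_map_mul_int [ContinuousMul S] {p : S → ℤ}
    (hp : ∀ s t, p (s * t) = p s + p t) (hpc : Continuous p) (hξ : 0 < p ξ) (a b : ℤ) :
    IsCompact (p ⁻¹' Icc a b) := by
  convert isCompact_preimage_Icc_of_map_mul hC hCξ (ℓ := fun s => (p s : ℝ))
    (fun s t => by simp [hp]) (by fun_prop) (by exact_mod_cast hξ) a b using 1
  ext s
  simp

theorem eq_zero_of_map_mul_of_apply_eq_zero {u : S → ℤ} (hu : ∀ s t, u (s * t) = u s + u t)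
    (huc : Continuous u) (huξ : u ξ = 0) : u = 0 := by
  obtain ⟨M, hM⟩ := hC.bddAbove_image (continuous_abs.comp huc).continuousOn
  funext s
  by_contra hs
  obtain ⟨c, hc, n, hcn⟩ := hCξ (s ^ (M + 1))
  have h : (M + 1) * u s = u c := by
    rw [← smul_eq_mul, ← map_zpow_of_map_mul hu, hcn, hu, map_zpow_of_map_mul hu, huξ, smul_zero,
      add_zero]
  have hcM : |u c| ≤ M := hM ⟨c, hc, rfl⟩
  have hs1 : 1 ≤ |u s| := Int.one_le_abs hs
  rw [← h, abs_mul] at hcM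
  nlinarith [abs_nonneg (M + 1), le_abs_self (M + 1)]

theorem eq_of_map_mul_of_surjective {p q : S → ℤ} (hp : ∀ s t, p (s * t) = p s + p t)
    (hpc : Continuous p) (hps : Surjective p) (hpξ : 0 < p ξ)
    (hq : ∀ s t, q (s * t) = q s + q t) (hqc : Continuous q) (hqs : Surjective q)
    (hqξ : 0 < q ξ) : q = p := by
  have hprop : ∀ s, q ξ * p s = p ξ * q s := fun s => sub_eq_zero.1 <| congrFun
    (eq_zero_of_map_mul_of_apply_eq_zero hC hCξ (u := fun s => q ξ * p s - p ξ * q s)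
      (fun s t => by rw [hp, hq]; ring) (by fun_prop) (by ring)) s
  obtain ⟨s₁, hs₁⟩ := hps 1
  obtain ⟨t₁, ht₁⟩ := hqs 1
  have hξ : p ξ = q ξ := Int.dvd_antisymm hpξ.le hqξ.le
    ⟨q s₁, by simpa [hs₁] using hprop s₁⟩ ⟨p t₁, by simpa [ht₁] using (hprop t₁).symm⟩
  funext s
  have hs := hprop s
  rw [← hξ] at hs
  exact mul_left_cancel₀ hpξ.ne' hs.symm

end CocompactCyclic

section Swallowing

variable {S H : Type*} [Group S] [TopologicalSpace S] [IsTopologicalGroup S] [Group H]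
  [TopologicalSpace H] {π : S →* MulAut H} (hπ : Continuous fun q : S × H => π q.1 q.2)
include hπ

theorem exists_forall_image_act_subset {C : Set S} {ξ : S} (hC : IsCompact C)
    (hCξ : ∀ s, ∃ c ∈ C, ∃ n : ℤ, s = c * ξ ^ n) {p : S → ℤ}
    (hp : ∀ s t, p (s * t) = p s + p t) (hpc : Continuous p) (hξ : 0 < p ξ) {U : Set H}
    (hU : IsVacuum (π ξ) U) {K : Set H} (hK : IsCompact K) :
    ∃ k : ℕ, ∀ s, (k : ℤ) ≤ p s → π s '' K ⊆ U := by
  obtain ⟨N, hN⟩ := eventually_atTop.1 (hU _ ((hC.inv.prod hK).image hπ))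
  obtain ⟨B, hB⟩ := (hC.inv.image hpc).bddAbove
  refine ⟨(N * p ξ + B).toNat, fun s hs => ?_⟩
  obtain ⟨c, hc, n, hcn⟩ := hCξ s⁻¹
  have hs' : s = ξ ^ (-n) * c⁻¹ := by rw [← inv_inv s, hcn, mul_inv_rev, zpow_neg]
  have hcB : p c⁻¹ ≤ B := hB ⟨c⁻¹, inv_mem_inv.2 hc, rfl⟩
  have hps : p s = -n * p ξ + p c⁻¹ := by rw [hs', hp, map_zpow_of_map_mul hp, smul_eq_mul]
  have hnN : (N : ℤ) ≤ -n :=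
    le_of_mul_le_mul_right (by nlinarith [Int.self_le_toNat (N * p ξ + B)]) hξ
  obtain ⟨j, hj⟩ := Int.eq_ofNat_of_zero_le (by omega : 0 ≤ -n)
  rintro _ ⟨x, hx, rfl⟩
  have hsx : π s x = (⇑(π ξ))^[j] (π c⁻¹ x) := by
    rw [iterate_act, ← MulAut.mul_apply, ← map_mul, hs', hj, zpow_natCast]
  rw [hsx]
  exact hN j (by omega) ⟨_, ⟨(c⁻¹, x), ⟨inv_mem_inv.2 hc, hx⟩, rfl⟩, rfl⟩

end Swallowing

section ForwardCore

variable {S H : Type*} [Group S] [Group H] {π : S →* MulAut H} {p : S → ℤ} {Ω₀ : Subgroup H}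

variable (π p Ω₀) in
def forwardCore : Subgroup H := ⨅ (s : S) (_ : 0 ≤ p s), Ω₀.comap (π s : H →* H)

theorem mem_forwardCore {x : H} : x ∈ forwardCore π p Ω₀ ↔ ∀ s, 0 ≤ p s → π s x ∈ Ω₀ := by
  simp [forwardCore, Subgroup.mem_iInf]

section Algebra

variable (hp : ∀ s t, p (s * t) = p s + p t)
include hp

theorem forwardCore_le : forwardCore π p Ω₀ ≤ Ω₀ := fun x hx => by
  simpa using mem_forwardCore.1 hx 1 (by simpa using (map_zpow_of_map_mul hp 1 0).ge)

theorem image_act_subset_forwardCore {K : Set H} {k : ℤ}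
    (hK : ∀ s, k ≤ p s → π s '' K ⊆ Ω₀) {s : S} (hs : k ≤ p s) :
    π s '' K ⊆ forwardCore π p Ω₀ := by
  rintro _ ⟨x, hx, rfl⟩
  refine mem_forwardCore.2 fun t ht => ?_
  rw [← MulAut.mul_apply, ← map_mul]
  exact hK _ (by rw [hp]; omega) ⟨x, hx, rfl⟩

theorem image_act_forwardCore_subset {t : S} (ht : 0 ≤ p t) :
    π t '' forwardCore π p Ω₀ ⊆ forwardCore π p Ω₀ :=
  image_act_subset_forwardCore hp (fun _ hs => by
    rintro _ ⟨x, hx, rfl⟩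
    exact mem_forwardCore.1 hx _ hs) ht

theorem image_act_forwardCore_eq {w : S} (hw : p w = 0) :
    π w '' forwardCore π p Ω₀ = forwardCore π p Ω₀ := by
  refine (image_act_forwardCore_subset hp hw.ge).antisymm fun x hx => ⟨π w⁻¹ x, ?_, by simp⟩
  have hw' : p w⁻¹ = 0 := by simpa [hw] using map_zpow_of_map_mul hp w (-1)
  exact image_act_forwardCore_subset hp hw'.ge ⟨x, hx, rfl⟩

end Algebra

variable [TopologicalSpace S] [TopologicalSpace H] [IsTopologicalGroup H]
  (hπ : Continuous fun q : S × H => π q.1 q.2) (hΩo : IsOpen (Ω₀ : Set H))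
include hπ hΩo

theorem isClosed_forwardCore : IsClosed (forwardCore π p Ω₀ : Set H) := by
  have : (forwardCore π p Ω₀ : Set H) = ⋂ s ∈ {s | 0 ≤ p s}, π s ⁻¹' Ω₀ := by
    ext; simp [mem_forwardCore]
  rw [this]
  exact isClosed_biInter fun s _ => (Ω₀.isClosed_of_isOpen hΩo).preimage (continuous_act hπ s)

theorem isOpen_forwardCore {k : ℤ} (hP : IsCompact (p ⁻¹' Icc 0 (k - 1)))
    (hk : ∀ s, k ≤ p s → π s '' Ω₀ ⊆ Ω₀) : IsOpen (forwardCore π p Ω₀ : Set H) := by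
  have hnear : ∀ᶠ x in 𝓝 (1 : H), ∀ s ∈ p ⁻¹' Icc 0 (k - 1), π s x ∈ Ω₀ :=
    hP.eventually_forall_of_forall_eventually fun s _ =>
      (hπ.comp continuous_swap).continuousAt.eventually_mem (hΩo.mem_nhds (by simp))
  refine Subgroup.isOpen_of_mem_nhds _ (g := 1) ?_
  filter_upwards [hnear, hΩo.mem_nhds Ω₀.one_mem] with x hx hx₀
  refine mem_forwardCore.2 fun s hs => ?_
  rcases lt_or_ge (p s) k with h | h
  · exact hx s ⟨hs, by omega⟩
  · exact hk s h ⟨x, hx₀, rfl⟩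

end ForwardCore

theorem contraction_cocompact_structure_general
    {H : Type*} [Group H] [TopologicalSpace H] [IsTopologicalGroup H] [LocallyCompactSpace H]
    (hHnc : ¬ IsCompact (Set.univ : Set H))
    (hH0 : IsCompact (connectedComponent (1 : H)))
    {S : Type*} [Group S] [TopologicalSpace S] [IsTopologicalGroup S] [LocallyCompactSpace S]
    (π : S →* MulAut H)
    (hcont : Continuous fun q : S × H => π q.1 q.2)
    (ξ : S)
    (hcocompact : CompactSpace (S ⧸ Subgroup.zpowers ξ))
    (hcontr : ∃ U : Set H, IsCompact U ∧ ∀ M : Set H, IsCompact M →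
      ∃ N : ℕ, ∀ k ≥ N, (⇑(π ξ))^[k] '' M ⊆ U) :
    ∃ p : S → ℤ,
      (∀ s t : S, p (s * t) = p s + p t) ∧ Continuous p ∧
      Function.Surjective p ∧ 0 < p ξ ∧
      (∀ q : S → ℤ, (∀ s t : S, q (s * t) = q s + q t) → Continuous q →
        Function.Surjective q → 0 < q ξ → q = p) ∧
      IsCompact {s : S | p s = 0} ∧
      ∃ Ω : Subgroup H, IsCompact (Ω : Set H) ∧ IsOpen (Ω : Set H) ∧
        (∀ w : S, p w = 0 → ⇑(π w) '' (Ω : Set H) = (Ω : Set H)) ∧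
        (∀ s : S, 0 ≤ p s → ⇑(π s) '' (Ω : Set H) ⊆ (Ω : Set H)) ∧
        ∀ K : Set H, IsCompact K → ∃ k : ℕ, ∀ s : S, (k : ℤ) ≤ p s →
          ⇑(π s) '' K ⊆ (Ω : Set H) := by
  obtain ⟨U, hUc, hU⟩ := hcontr
  have hUvac : IsVacuum (π ξ) U := fun M hM => eventually_atTop.2 (hU M hM)
  obtain ⟨C, hC, hCξ⟩ := exists_isCompact_forall_eq_mul_zpow ξ
  obtain ⟨Ω₀, hΩc, hΩo, hΩmaps, hΩvac⟩ := hUvac.exists_subgroup_mapsTo_of_isCompact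
    (continuous_act hcont ξ) hUc (exists_isCompact_isOpen_subgroup hH0)
  have hne : π ξ '' Ω₀ ≠ Ω₀ := fun h => hHnc (hΩvac.eq_univ_of_image_eq (π ξ).injective h ▸ hΩc)
  obtain ⟨p, hp, hpc, hps, hξ⟩ := exists_int_of_isLocallyConstant hC hCξ
    (modularLog_mul hcont hΩc hΩo) (isLocallyConstant_modularLog hcont hΩc hΩo)
    (modularLog_pos hcont hΩc hΩo hΩmaps.image_subset hne)
  have hP := isCompact_preimage_Icc_of_map_mul_int hC hCξ hp hpc hξ
  have hswallow := fun K (hK : IsCompact K) =>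
    exists_forall_image_act_subset hcont hC hCξ hp hpc hξ hΩvac hK
  obtain ⟨k₀, hk₀⟩ := hswallow _ hΩc
  refine ⟨p, hp, hpc, hps, hξ,
    fun q hq hqc hqs hqξ => eq_of_map_mul_of_surjective hC hCξ hp hpc hps hξ hq hqc hqs hqξ,
    by have h0 := hP 0 0; rwa [Icc_self] at h0, forwardCore π p Ω₀,
    hΩc.of_isClosed_subset (isClosed_forwardCore hcont hΩo) (forwardCore_le hp),
    isOpen_forwardCore hcont hΩo (hP 0 (k₀ - 1)) hk₀, fun w hw => image_act_forwardCore_eq hp hw,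
    fun s hs => image_act_forwardCore_subset hp hs, fun K hK => ?_⟩
  obtain ⟨k, hk⟩ := hswallow K hK
  exact ⟨k, fun s hs => image_act_subset_forwardCore hp hk hs⟩

/-- Let `H` be a non-compact locally compact group with compact identity component, and
let a locally compact group `S` act continuously on `H` by automorphisms `π`, with an
element `ξ ∈ S` generating an infinite discrete cocompact cyclic subgroup such that
`π ξ` contracts `H`. Then (i) there is a unique continuous surjective homomorphism
`p : S → ℤ` with `p ξ > 0`, with compact kernel `W`; and (ii) there is a compact open
subgroup `Ω ⊆ H` invariant under `π(W)`, stable under `π(p⁻¹(ℕ))`, which swallows every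
compact subset of `H` under `π(s)` for `p s` large. -/
theorem contraction_cocompact_structure
    {H : Type*} [Group H] [TopologicalSpace H] [IsTopologicalGroup H] [LocallyCompactSpace H]
    (hHnc : ¬ IsCompact (Set.univ : Set H))
    (hH0 : IsCompact (connectedComponent (1 : H)))
    {S : Type*} [Group S] [TopologicalSpace S] [IsTopologicalGroup S] [LocallyCompactSpace S]
    (π : S →* MulAut H)
    (hcont : Continuous fun q : S × H => π q.1 q.2)
    (ξ : S)
    (hinf : (Subgroup.zpowers ξ : Set S).Infinite)
    (hdisc : DiscreteTopology (Subgroup.zpowers ξ))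
    (hcocompact : CompactSpace (S ⧸ Subgroup.zpowers ξ))
    (hcontr : ∃ U : Set H, IsCompact U ∧ ∀ M : Set H, IsCompact M →
      ∃ N : ℕ, ∀ k ≥ N, (⇑(π ξ))^[k] '' M ⊆ U) :
    ∃ p : S → ℤ,
      (∀ s t : S, p (s * t) = p s + p t) ∧ Continuous p ∧
      Function.Surjective p ∧ 0 < p ξ ∧
      (∀ q : S → ℤ, (∀ s t : S, q (s * t) = q s + q t) → Continuous q →
        Function.Surjective q → 0 < q ξ → q = p) ∧
      IsCompact {s : S | p s = 0} ∧
      ∃ Ω : Subgroup H, IsCompact (Ω : Set H) ∧ IsOpen (Ω : Set H) ∧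
        (∀ w : S, p w = 0 → ⇑(π w) '' (Ω : Set H) = (Ω : Set H)) ∧
        (∀ s : S, 0 ≤ p s → ⇑(π s) '' (Ω : Set H) ⊆ (Ω : Set H)) ∧
        ∀ K : Set H, IsCompact K → ∃ k : ℕ, ∀ s : S, (k : ℤ) ≤ p s →
          ⇑(π s) '' K ⊆ (Ω : Set H) :=
  contraction_cocompact_structure_general hHnc hH0 π hcont ξ hcocompact hcontr
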